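/- Let B ↷ (Y,ν) and C ↷ (Z,η) be p.m.p. actions of countable groups B and C on standard probability spaces, and let Λ be a subgroup of a countable group Γ. Suppose there exist (i) a set S ⊆ Γ of left coset representatives for Λ in Γ (i.e., S contains exactly one element of each coset γΛ) such that γS △ S is finite for every γ ∈ Γ, and (ii) a bi-cofinitely Λ-equivariant measure space isomorphism φ_Λ: (Y^Λ, ν^Λ) → (Z^Λ, η^Λ). Then, with respect to these actions of B and C, there exists a bi-cofinitely Γ-equivariant measure space isomorphism φ: (Y^Γ, ν^Γ) → (Z^Γ, η^Γ). -/

import Mathlib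

/-!  Common definitions: wreath products, measured group actions, orbit equivalence,
measure equivalence, measurable splittings, cocycle superrigidity, and cofinitely
equivariant maps.  -/

open MeasureTheory Function Filter Set
open scoped ENNReal

namespace OEW


/-! ### Restricted direct sums and wreath products of groups -/

/-- The restricted direct sum `⊕_V B`: the subgroup of `V → B` consisting of finitely
supported functions (support = coordinates where the value is not `1`). -/
def dsum (V B : Type) [Group B] : Subgroup (V → B) where
  carrier := {f | (Function.mulSupport f).Finite}
  one_mem' := by
    simp [Function.mulSupport_one]
  mul_mem' := fun {f g} hf hg =>
    Set.Finite.subset (Set.Finite.union hf hg) (Function.mulSupport_mul f g)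
  inv_mem' := fun {f} hf => by simpa [Function.mulSupport_inv] using hf

variable {V B Γ : Type}

/-- The shift of a finitely supported function by `γ`. -/
def shiftSubtype [Group B] [Group Γ] [MulAction Γ V] (γ : Γ) (f : dsum V B) : dsum V B :=
  ⟨fun v => (f : V → B) (γ⁻¹ • v), by
    have h : (Function.mulSupport fun v => (f : V → B) (γ⁻¹ • v)) ⊆
        (fun v => γ⁻¹ • v) ⁻¹' Function.mulSupport (f : V → B) := fun v hv => hv
    exact Set.Finite.subset
      (Set.Finite.preimage ((MulAction.injective (γ⁻¹ : Γ)).injOn) f.2) h⟩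

/-- The shift by `γ` as an automorphism of the restricted direct sum. -/
def shiftEquiv [Group B] [Group Γ] [MulAction Γ V] (γ : Γ) : dsum V B ≃* dsum V B where
  toFun := shiftSubtype γ
  invFun := shiftSubtype γ⁻¹
  left_inv f := Subtype.ext (funext fun v => by simp [shiftSubtype])
  right_inv f := Subtype.ext (funext fun v => by simp [shiftSubtype])
  map_mul' f g := rfl

/-- The left shift action of `Γ` on `⊕_V B` as a homomorphism into the automorphism group. -/
def shiftHom (V B Γ : Type) [Group B] [Group Γ] [MulAction Γ V] :
    Γ →* MulAut (dsum V B) where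
  toFun γ := shiftEquiv γ
  map_one' := MulEquiv.ext fun f => Subtype.ext (funext fun v => by
    simp [shiftEquiv, shiftSubtype])
  map_mul' γ₁ γ₂ := MulEquiv.ext fun f => Subtype.ext (funext fun v => by
    simp [shiftEquiv, shiftSubtype, mul_smul] <;> rfl)

/-- The (restricted) permutational wreath product `B ≀_V Γ = (⊕_V B) ⋊ Γ`. -/
abbrev pwreath (V B Γ : Type) [Group B] [Group Γ] [MulAction Γ V] : Type :=
  SemidirectProduct (dsum V B) Γ (shiftHom V B Γ)

/-- The (restricted) regular wreath product `B ≀ Γ = (⊕_Γ B) ⋊ Γ`. -/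
abbrev wreath (B Γ : Type) [Group B] [Group Γ] : Type := pwreath Γ B Γ


/-- The shift ("generalized Bernoulli") action on `V → X`. -/
def shiftS [Group Γ] [MulAction Γ V] (γ : Γ) (x : V → X) : V → X :=
  fun v => x (γ⁻¹ • v)

variable {V B C Γ X Y Z : Type}

/-- The wreath product action: given an action `β : B → X → X`, the induced action of the
wreath product `B ≀_V Γ` on `V → X`. -/
def wreathSmul [Group B] [Group Γ] [MulAction Γ V] (β : B → X → X)
    (g : pwreath V B Γ) (x : V → X) : V → X :=
  fun v => β ((g.left : V → B) v) (x (g.right⁻¹ • v))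

/-- The coordinatewise action of the restricted direct sum `⊕_V B` on `V → X`. -/
def dsumSmul [Group B] (β : B → X → X) (b : dsum V B) (x : V → X) : V → X :=
  fun v => β ((b : V → B) v) (x v)

/-! ### Measured group actions, given by explicit action maps -/

/-- `a` is a measure preserving group action of `G` on `(X, μ)`. -/
def IsMpAction {G : Type} [Group G] [MeasurableSpace X] (a : G → X → X) (μ : Measure X) : Prop :=
  (∀ x, a 1 x = x) ∧ (∀ g h x, a (g * h) x = a g (a h x)) ∧ ∀ g, MeasurePreserving (a g) μ μ

/-- A probability measure preserving (p.m.p.) action. -/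
def IsPmpAction {G : Type} [Group G] [MeasurableSpace X] (a : G → X → X) (μ : Measure X) : Prop :=
  IsProbabilityMeasure μ ∧ IsMpAction a μ

/-- The action is (essentially) free. -/
def IsFreeAction {G : Type} [Group G] [MeasurableSpace X] (a : G → X → X) (μ : Measure X) : Prop :=
  ∀ᵐ x ∂μ, ∀ g : G, a g x = x → g = 1

/-- The action is ergodic: every invariant measurable set is null or conull. -/
def IsErgodicAction {G : Type} [Group G] [MeasurableSpace X] (a : G → X → X) (μ : Measure X) :
    Prop :=
  ∀ A : Set X, MeasurableSet A → (∀ g : G, a g ⁻¹' A = A) → μ A = 0 ∨ μ Aᶜ = 0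

/-- The action is totally ergodic: every infinite subgroup acts ergodically. -/
def IsTotallyErgodic {G : Type} [Group G] [MeasurableSpace X] (a : G → X → X) (μ : Measure X) :
    Prop :=
  ∀ H : Subgroup G, (H : Set G).Infinite → IsErgodicAction (fun (h : H) x => a (h : G) x) μ

/-- `φ` is a measure space isomorphism from `(X,μ)` to `(Y,ν)`: a measure preserving
measurable map admitting an a.e. two-sided measurable inverse. -/
def IsMeasureIso [MeasurableSpace X] [MeasurableSpace Y] (μ : Measure X) (ν : Measure Y)
    (φ : X → Y) : Prop :=
  MeasurePreserving φ μ ν ∧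
    ∃ ψ : Y → X, Measurable ψ ∧ (∀ᵐ x ∂μ, ψ (φ x) = x) ∧ (∀ᵐ y ∂ν, φ (ψ y) = y)

/-- `φ` is an orbit equivalence between the actions `a : G → X → X` and `b : H → Y → Y`:
a measure space isomorphism with `φ(G⬝x) = H⬝φ(x)` for a.e. `x`. -/
def IsOrbitEquivalence {G H : Type} [MeasurableSpace X] [MeasurableSpace Y]
    (a : G → X → X) (b : H → Y → Y) (μ : Measure X) (ν : Measure Y) (φ : X → Y) : Prop :=
  IsMeasureIso μ ν φ ∧
    ∀ᵐ x ∂μ, (∀ g : G, ∃ h : H, φ (a g x) = b h (φ x)) ∧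
      (∀ h : H, ∃ g : G, b h (φ x) = φ (a g x))

/-- The two actions are orbit equivalent. -/
def OrbitEquivalentActions {G H : Type} [MeasurableSpace X] [MeasurableSpace Y]
    (a : G → X → X) (b : H → Y → Y) (μ : Measure X) (ν : Measure Y) : Prop :=
  ∃ φ : X → Y, IsOrbitEquivalence a b μ ν φ

/-- `m` is the product, over the index set `ι`, of copies of the probability measure `ν`. -/
def IsProductMeasure {ι : Type} [MeasurableSpace X] (ν : Measure X) (m : Measure (ι → X)) :
    Prop :=
  IsProbabilityMeasure m ∧
    ∀ (s : Finset ι) (A : ι → Set X), (∀ i, MeasurableSet (A i)) →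
      m {x | ∀ i ∈ s, x i ∈ A i} = ∏ i ∈ s, ν (A i)

/-- A group is amenable if it admits a left translation invariant, finitely additive
probability measure defined on all of its subsets. -/
def IsAmenable (G : Type) [Group G] : Prop :=
  ∃ m : Set G → ℝ,
    (∀ A : Set G, 0 ≤ m A) ∧ m Set.univ = 1 ∧
    (∀ A B : Set G, Disjoint A B → m (A ∪ B) = m A + m B) ∧
    ∀ (g : G) (A : Set G), m ((g * ·) '' A) = m A

/-! ### Bundled p.m.p. actions on standard probability spaces -/

/-- A p.m.p. action of `G` on a standard probability space, bundled. -/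
structure PmpSystem (G : Type) [Group G] : Type 1 where
  (X : Type)
  [mX : MeasurableSpace X]
  (μ : Measure X)
  (act : G → X → X)
  (standardBorel : StandardBorelSpace X)
  (isProb : IsProbabilityMeasure μ)
  (pmp : IsMpAction act μ)

/-- The bundled action is (essentially) free. -/
def PmpSystem.Free {G : Type} [Group G] (S : PmpSystem G) : Prop :=
  ∀ᵐ x ∂S.μ, ∀ g : G, S.act g x = x → g = 1

/-- The bundled action is ergodic. -/
def PmpSystem.ErgodicAct {G : Type} [Group G] (S : PmpSystem G) : Prop :=
  ∀ A : Set S.X, MeasurableSet[S.mX] A → (∀ g : G, S.act g ⁻¹' A = A) → S.μ A = 0 ∨ S.μ Aᶜ = 0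

/-- Two countable groups are orbit equivalent if they admit orbit equivalent free ergodic
p.m.p. actions on standard probability spaces. -/
def GroupsOrbitEquivalent (G H : Type) [Group G] [Group H] : Prop :=
  ∃ (S : PmpSystem G) (T : PmpSystem H),
    letI := S.mX
    letI := T.mX
    S.Free ∧ T.Free ∧ S.ErgodicAct ∧ T.ErgodicAct ∧
      OrbitEquivalentActions S.act T.act S.μ T.μ

/-! ### Measure equivalence -/

/-- `s` is a measurable fundamental domain for the action `a` on `(Ω, m)`. -/
def IsFundDomain {G Ω : Type} [MeasurableSpace Ω] (a : G → Ω → Ω) (s : Set Ω)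
    (m : Measure Ω) : Prop :=
  MeasurableSet s ∧ (∀ᵐ x ∂m, ∃ g : G, a g x ∈ s) ∧
    ∀ g g' : G, g ≠ g' → m (a g '' s ∩ a g' '' s) = 0

/-- A measure equivalence coupling of `G` with `H`: commuting measure preserving actions on
a standard nonzero σ-finite measure space, each admitting a finite measure measurable
fundamental domain. -/
structure MECoupling (G H : Type) [Group G] [Group H] : Type 1 where
  (Ω : Type)
  [mΩ : MeasurableSpace Ω]
  (m : Measure Ω)
  (aG : G → Ω → Ω)
  (aH : H → Ω → Ω)
  (standardBorel : StandardBorelSpace Ω)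
  (sigmaFinite : SigmaFinite m)
  (nonzero : m ≠ 0)
  (mpG : IsMpAction aG m)
  (mpH : IsMpAction aH m)
  (comm : ∀ (g : G) (h : H) (x : Ω), aG g (aH h x) = aH h (aG g x))
  (FG : Set Ω)
  (FH : Set Ω)
  (fundG : IsFundDomain aG FG m)
  (fundH : IsFundDomain aH FH m)
  (finG : m FG < ⊤)
  (finH : m FH < ⊤)

/-- `G` and `H` are measure equivalent. -/
def MeasureEquivalent (G H : Type) [Group G] [Group H] : Prop :=
  Nonempty (MECoupling G H)

/-- `G` and `H` admit a measure equivalence coupling of coupling index `α`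
(the ratio of the measures of the `H`- and `G`-fundamental domains). -/
def MeasureEquivalentWithIndex (G H : Type) [Group G] [Group H] (α : ℝ≥0∞) : Prop :=
  ∃ c : MECoupling G H, c.m c.FH = α * c.m c.FG



variable {X : Type}

/-! ### Countable Borel equivalence relations and measurable splittings -/

/-- `R` is a p.m.p. countable Borel equivalence relation on `(X, μ)`: every Borel bijection
between Borel subsets whose graph is contained in `R` preserves `μ`. -/
def IsPmpCBER [MeasurableSpace X] (R : X → X → Prop) (μ : Measure X) : Prop :=
  Equivalence R ∧ MeasurableSet {p : X × X | R p.1 p.2} ∧ (∀ x, {y | R x y}.Countable) ∧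
    ∀ (f : X → X) (A B : Set X), Measurable f → MeasurableSet A → MeasurableSet B →
      Set.BijOn f A B → (∀ x ∈ A, R x (f x)) →
      ∀ C : Set X, MeasurableSet C → C ⊆ B → μ (A ∩ f ⁻¹' C) = μ C

/-- The relation `R` is ergodic with respect to `μ`. -/
def IsErgodicRel [MeasurableSpace X] (R : X → X → Prop) (μ : Measure X) : Prop :=
  ∀ A : Set X, MeasurableSet A → (∀ x y, R x y → (x ∈ A ↔ y ∈ A)) → μ A = 0 ∨ μ Aᶜ = 0

/-- The subrelations `R₀` and `R₁` are freely independent: there is no reduced cycle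
alternating between nontrivial `R₀`-steps and `R₁`-steps. -/
def FreelyIndepRel (R₀ R₁ : X → X → Prop) : Prop :=
  ¬ ∃ (n : ℕ) (i : ℕ → Fin 2) (x : ℕ → X),
      2 ≤ n ∧ x n = x 0 ∧ (∀ j < n, x j ≠ x (j + 1)) ∧
      (∀ j, j + 1 < n → i j ≠ i (j + 1)) ∧
      (∀ j < n, if i j = 0 then R₀ (x j) (x (j + 1)) else R₁ (x j) (x (j + 1)))

/-- `R` splits as the free product `R = R₀ ∗ R₁`: `R₀` and `R₁` are freely independent
subequivalence relations generating `R`. -/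
def SplitsAs (R R₀ R₁ : X → X → Prop) : Prop :=
  Equivalence R₀ ∧ Equivalence R₁ ∧ (∀ x y, R₀ x y → R x y) ∧ (∀ x y, R₁ x y → R x y) ∧
    FreelyIndepRel R₀ R₁ ∧
    ∀ x y, R x y ↔ Relation.EqvGen (fun u v => R₀ u v ∨ R₁ u v) x y

/-- The splitting `R = R₀ ∗ R₁` is inessential on the (invariant) set `C`. -/
def InessentialOn [MeasurableSpace X] (R R₀ R₁ : X → X → Prop) (C : Set X) : Prop :=
  ∃ X₀ X₁ : Set X, MeasurableSet X₀ ∧ MeasurableSet X₁ ∧ X₀ ∪ X₁ = C ∧ Disjoint X₀ X₁ ∧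
    (∀ x ∈ C, ∀ y ∈ C, R x y → (x ∈ X₀ ↔ y ∈ X₀)) ∧
    ∃ U₀ U₁ : Set X, MeasurableSet U₀ ∧ MeasurableSet U₁ ∧ U₀ ⊆ X₀ ∧ U₁ ⊆ X₁ ∧
      (∀ x ∈ X₀, ∃ y ∈ U₀, R x y) ∧ (∀ x ∈ X₁, ∃ y ∈ U₁, R x y) ∧
      (∀ x ∈ U₀, ∀ y ∈ U₀, (R x y ↔ R₀ x y)) ∧ (∀ x ∈ U₁, ∀ y ∈ U₁, (R x y ↔ R₁ x y))

/-- The splitting is `μ`-essential: there is no `R`-invariant `μ`-conull Borel set on which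
it is inessential. -/
def MuEssential [MeasurableSpace X] (μ : Measure X) (R R₀ R₁ : X → X → Prop) : Prop :=
  ¬ ∃ C : Set X, MeasurableSet C ∧ μ Cᶜ = 0 ∧ (∀ x y, R x y → (x ∈ C ↔ y ∈ C)) ∧
      InessentialOn R R₀ R₁ C

/-- `R = R₀ ∗ R₁` is a `μ`-essential splitting. -/
def EssentialSplitting [MeasurableSpace X] (μ : Measure X) (R R₀ R₁ : X → X → Prop) : Prop :=
  SplitsAs R R₀ R₁ ∧ MuEssential μ R R₀ R₁

/-- The orbit equivalence relation of an action given by `a`. -/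
def orbitRelOf {G : Type} (a : G → X → X) : X → X → Prop := fun x y => ∃ g : G, a g x = y

/-- The restriction of the relation `R` to the set `C` (extended by equality off `C`). -/
def restrictRel (R : X → X → Prop) (C : Set X) : X → X → Prop :=
  fun x y => x = y ∨ (R x y ∧ x ∈ C ∧ y ∈ C)

/-- `R` is hyperfinite: an increasing union of Borel equivalence relations with finite
classes. -/
def IsHyperfinite [MeasurableSpace X] (R : X → X → Prop) : Prop :=
  ∃ S : ℕ → X → X → Prop,
    (∀ n, Equivalence (S n)) ∧ (∀ n, MeasurableSet {p : X × X | S n p.1 p.2}) ∧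
    (∀ n x y, S n x y → S (n + 1) x y) ∧ (∀ n x, {y | S n x y}.Finite) ∧
    ∀ x y, R x y ↔ ∃ n, S n x y

/-- `R` is `μ`-amenable: off a `μ`-null set it is hyperfinite. -/
def MuAmenableRel [MeasurableSpace X] (R : X → X → Prop) (μ : Measure X) : Prop :=
  ∃ C : Set X, MeasurableSet C ∧ μ Cᶜ = 0 ∧ IsHyperfinite (restrictRel R C)

/-- `R` is `μ`-nowhere amenable: there is no positive measure Borel set on which the
restriction of `R` is amenable. -/
def MuNowhereAmenable [MeasurableSpace X] (R : X → X → Prop) (μ : Measure X) : Prop :=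
  ¬ ∃ A : Set X, MeasurableSet A ∧ 0 < μ A ∧
      ∃ C : Set X, MeasurableSet C ∧ C ⊆ A ∧ μ (A \ C) = 0 ∧
        IsHyperfinite (restrictRel R C)

/-- The symmetric irreflexive graph `E` has no cycles. -/
def HasNoGraphCycles (E : X → X → Prop) : Prop :=
  ¬ ∃ (n : ℕ) (x : ℕ → X), 3 ≤ n ∧ (∀ j < n, E (x j) (x (j + 1))) ∧ x n = x 0 ∧
      ∀ j < n, ∀ k < n, j ≠ k → x j ≠ x k

/-- `R` is treeable: it is generated by a Borel graphing whose connected components are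
acyclic. -/
def IsTreeable [MeasurableSpace X] (R : X → X → Prop) : Prop :=
  ∃ E : X → X → Prop,
    MeasurableSet {p : X × X | E p.1 p.2} ∧ (∀ x y, E x y → E y x) ∧ (∀ x, ¬ E x x) ∧
    (∀ x y, E x y → R x y) ∧ (∀ x y, R x y ↔ Relation.EqvGen E x y) ∧ HasNoGraphCycles E


/-- `Γ` admits an essential measurable splitting: some free p.m.p. action of `Γ` on a
standard probability space has orbit equivalence relation admitting a `μ`-essential
splitting (into Borel subequivalence relations). -/
def AdmitsEssentialMeasurableSplitting (Γ : Type) [Group Γ] : Prop :=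
  ∃ S : PmpSystem Γ, S.Free ∧
    ∃ R₀ R₁ : S.X → S.X → Prop,
      letI := S.mX
      MeasurableSet {p : S.X × S.X | R₀ p.1 p.2} ∧
      MeasurableSet {p : S.X × S.X | R₁ p.1 p.2} ∧
      EssentialSplitting S.μ (orbitRelOf S.act) R₀ R₁


variable {X Y Z : Type}

/-! ### Cocycles and superrigidity -/

/-- A measurable `L`-valued cocycle over the action `a`. -/
def IsCocycle {G L : Type} [Group G] [MeasurableSpace X] [Group L] [MeasurableSpace L]
    (a : G → X → X) (μ : Measure X) (c : G → X → L) : Prop :=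
  (∀ g : G, Measurable (c g)) ∧
    ∀ g h : G, ∀ᵐ x ∂μ, c (g * h) x = c g (a h x) * c h x

/-- Two cocycles are cohomologous. -/
def Cohomologous {G L : Type} [Group G] [MeasurableSpace X] [Group L] [MeasurableSpace L]
    (a : G → X → X) (μ : Measure X) (c₀ c₁ : G → X → L) : Prop :=
  ∃ f : X → L, Measurable f ∧ ∀ g : G, ∀ᵐ x ∂μ, f (a g x) * c₀ g x * (f x)⁻¹ = c₁ g x

/-- The action `a` is `L`-cocycle superrigid: every measurable `L`-valued cocycle is
cohomologous to a group homomorphism. -/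
def IsCocycleSuperrigid {G : Type} [Group G] [MeasurableSpace X]
    (L : Type) [Group L] [MeasurableSpace L] (a : G → X → X) (μ : Measure X) : Prop :=
  ∀ c : G → X → L, IsCocycle a μ c →
    ∃ ρ : G →* L, Cohomologous a μ c fun g _ => ρ g

/-- The action is `𝒢_ctble`-cocycle superrigid: `L`-cocycle superrigid for every countable
discrete group `L`. -/
def IsGctbleCocycleSuperrigid {G : Type} [Group G] [MeasurableSpace X]
    (a : G → X → X) (μ : Measure X) : Prop :=
  ∀ (L : Type) [Group L] [MeasurableSpace L] [MeasurableSingletonClass L],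
    Countable L → IsCocycleSuperrigid L a μ

/-- The action is strongly ergodic. -/
def IsStronglyErgodic {G : Type} [Group G] [MeasurableSpace X]
    (a : G → X → X) (μ : Measure X) : Prop :=
  ∀ A : ℕ → Set X, (∀ n, MeasurableSet (A n)) →
    (∀ g : G, Tendsto (fun n => μ (symmDiff (a g '' A n) (A n))) atTop (nhds 0)) →
    Tendsto (fun n => μ (A n) * μ (A n)ᶜ) atTop (nhds 0)

/-- Soficity of a group. -/
def IsSofic (G : Type) [Group G] : Prop :=
  ∀ (F : Finset G) (ε : ℝ), 0 < ε →
    ∃ (n : ℕ) (σ : G → Equiv.Perm (Fin n)),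
      (∀ g ∈ F, ∀ h ∈ F,
        (1 - ε) * n ≤ ((Finset.univ.filter fun i => σ (g * h) i = σ g (σ h i)).card : ℝ)) ∧
      ∀ g ∈ F, g ≠ 1 →
        (1 - ε) * n ≤ ((Finset.univ.filter fun i => σ g i ≠ i).card : ℝ)

/-! ### Internal free products -/

/-- `Γ` is the internal free product of its subgroups `Λ` and `H`: together they generate
`Γ` and no alternating product of nonidentity elements is the identity. -/
def IsInternalFreeProduct {Γ : Type} [Group Γ] (Λ H : Subgroup Γ) : Prop :=
  Λ ⊔ H = ⊤ ∧
    ∀ (n : ℕ) (w : Fin (n + 1) → Γ) (c : Fin (n + 1) → Bool),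
      (∀ i, w i ≠ 1) →
      (∀ i, if c i then w i ∈ Λ else w i ∈ H) →
      (∀ i : Fin n, c i.castSucc ≠ c i.succ) →
      (List.ofFn w).prod ≠ 1





/-! ### Cofinitely equivariant maps -/

/-- `x ∼_B y`: the functions differ in finitely many coordinates, and wherever they differ
the values lie in the same `B`-orbit. -/
def simRel (β : B → Y → Y) (x y : Γ → Y) : Prop :=
  {γ : Γ | x γ ≠ y γ}.Finite ∧ ∀ γ : Γ, x γ ≠ y γ → ∃ l : B, β l (x γ) = y γ

/-- `φ` is cofinitely equivariant with respect to the given actions of `B` and `C`. -/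
def CofinitelyEquivariant [Group Γ] [MeasurableSpace Y] (β : B → Y → Y) (χ : C → Z → Z)
    (νΓ : Measure (Γ → Y)) (φ : (Γ → Y) → (Γ → Z)) : Prop :=
  ∀ᵐ y ∂νΓ, ∀ x : Γ → Y, simRel β x y → ∀ γ : Γ,
    simRel χ (φ (shiftS γ x)) (shiftS γ (φ y))

/-- `φ` (with a.e. inverse `ψ`) is a bi-cofinitely equivariant measure space isomorphism. -/
def BiCofinitelyEquivariant [Group Γ] [MeasurableSpace Y] [MeasurableSpace Z]
    (β : B → Y → Y) (χ : C → Z → Z) (νΓ : Measure (Γ → Y)) (ηΓ : Measure (Γ → Z))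
    (φ : (Γ → Y) → (Γ → Z)) (ψ : (Γ → Z) → (Γ → Y)) : Prop :=
  MeasurePreserving φ νΓ ηΓ ∧ Measurable ψ ∧
    (∀ᵐ y ∂νΓ, ψ (φ y) = y) ∧ (∀ᵐ z ∂ηΓ, φ (ψ z) = z) ∧
    CofinitelyEquivariant β χ νΓ φ ∧ CofinitelyEquivariant χ β ηΓ ψ

/-! ### Stable orbit equivalence -/

/-- The actions `a` and `b` are stably orbit equivalent. -/
def StablyOrbitEquivalent {G H : Type} [MeasurableSpace X] [MeasurableSpace Y]
    (a : G → X → X) (b : H → Y → Y) (μ : Measure X) (ν : Measure Y) : Prop :=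
  ∃ (X₀ : Set X) (Y₀ : Set Y) (φ : X → Y),
    MeasurableSet X₀ ∧ MeasurableSet Y₀ ∧ 0 < μ X₀ ∧ 0 < ν Y₀ ∧
    (∀ᵐ x ∂μ.restrict X₀, φ x ∈ Y₀) ∧
    MeasurePreserving φ ((μ X₀)⁻¹ • μ.restrict X₀) ((ν Y₀)⁻¹ • ν.restrict Y₀) ∧
    (∃ ψ : Y → X, Measurable ψ ∧ (∀ᵐ x ∂μ.restrict X₀, ψ (φ x) = x) ∧
      (∀ᵐ y ∂ν.restrict Y₀, φ (ψ y) = y)) ∧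
    ∀ᵐ x ∂μ.restrict X₀,
      (∀ g : G, a g x ∈ X₀ → ∃ h : H, φ (a g x) = b h (φ x)) ∧
      (∀ h : H, b h (φ x) ∈ Y₀ → ∃ g : G, a g x ∈ X₀ ∧ φ (a g x) = b h (φ x))

/-!
Choosing the coset representatives `S` identifies `Γ` with `S × Λ` via `(s, λ) ↦ s λ`, hence
`Y^Γ` with `(Y^Λ)^S` and `ν^Γ` with `(ν^Λ)^S`; the lifted isomorphism applies `φ_Λ` in every
block. The `s`-block of `γ • x` is the block of `x` at the representative `s'` of `γ⁻¹ s Λ`,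
translated by `s'⁻¹ γ⁻¹ s ∈ Λ`. This translation is trivial unless `s ∉ γ S`, which happens for
finitely many `s` only, and `x ∼ y` changes only finitely many blocks; so cofinite
`Λ`-equivariance of `φ_Λ` in each block gives cofinite `Γ`-equivariance of the lift.
-/

section ProductMeasure

variable {ι W W' : Type} [MeasurableSpace W] [MeasurableSpace W'] {ν : Measure W}
  [IsProbabilityMeasure ν]

lemma IsProductMeasure.eq_infinitePi {m : Measure (ι → W)} (hm : IsProductMeasure ν m) :
    m = Measure.infinitePi fun _ => ν :=
  Measure.eq_infinitePi _ fun s t ht => hm.2 s t ht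

lemma _root_.MeasureTheory.MeasurePreserving.piMap_infinitePi {ν' : Measure W'}
    [IsProbabilityMeasure ν'] {f : W → W'} (hf : MeasurePreserving f ν ν') :
    MeasurePreserving (Pi.map fun _ : ι => f) (Measure.infinitePi fun _ => ν)
      (Measure.infinitePi fun _ => ν') where
  measurable := measurable_pi_lambda _ fun i => hf.measurable.comp (measurable_pi_apply i)
  map_eq := by
    rw [← hf.map_eq]
    exact Measure.infinitePi_map_pi _ fun _ => hf.measurable

lemma ae_forall_infinitePi [Countable ι] {p : W → Prop} (hp : ∀ᵐ w ∂ν, p w) :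
    ∀ᵐ x ∂(Measure.infinitePi fun _ : ι => ν), ∀ i, p (x i) :=
  ae_all_iff.2 fun i => (measurePreserving_eval_infinitePi _ i).quasiMeasurePreserving.ae hp

end ProductMeasure

section SimRel

variable {ι κ B Y : Type} {β : B → Y → Y}

lemma simRel_comp_equiv (e : ι ≃ κ) {x y : κ → Y} :
    simRel β (x ∘ e) (y ∘ e) ↔ simRel β x y :=
  and_congr ⟨fun h => Set.Finite.of_preimage (s := {k | x k ≠ y k}) h e.surjective,
    fun h => h.preimage e.injective.injOn⟩ (e.forall_congr fun _ => Iff.rfl)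

lemma simRel_uncurry_iff {x y : ι → κ → Y} :
    simRel β (Function.uncurry x) (Function.uncurry y) ↔
      (∀ i, simRel β (x i) (y i)) ∧ {i | x i ≠ y i}.Finite := by
  constructor
  · rintro ⟨hfin, horbit⟩
    refine ⟨fun i => ⟨hfin.preimage (Prod.mk_right_injective i).injOn, fun j => horbit (i, j)⟩,
      (hfin.image Prod.fst).subset fun i hi => ?_⟩
    obtain ⟨j, hj⟩ := Function.ne_iff.1 hi
    exact ⟨(i, j), hj, rfl⟩
  · rintro ⟨hblocks, hfin⟩
    refine ⟨(hfin.biUnion fun i _ => (hblocks i).1.image (Prod.mk i)).subset ?_,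
      fun p => (hblocks p.1).2 p.2⟩
    rintro ⟨i, j⟩ (hij : x i j ≠ y i j)
    exact Set.mem_biUnion (Function.ne_iff.2 ⟨j, hij⟩) ⟨j, hij, rfl⟩

lemma shiftS_one {G V : Type} [Group G] [MulAction G V] (x : V → Y) :
    shiftS (1 : G) x = x := by
  funext v
  simp [shiftS]

end SimRel

section CosetBlocks

open Subgroup

variable {Γ : Type} [Group Γ] {Λ : Subgroup Γ} {S : Set Γ}

lemma isComplement_of_existsUnique_inv_mul_mem (h : ∀ γ : Γ, ∃! s, s ∈ S ∧ γ⁻¹ * s ∈ Λ) :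
    IsComplement S Λ := by
  refine isComplement_iff_existsUnique_inv_mul_mem.2 fun γ => ?_
  obtain ⟨s, ⟨hs, hγs⟩, huniq⟩ := h γ
  have inv_mul_mem_comm {a b : Γ} : a⁻¹ * b ∈ Λ ↔ b⁻¹ * a ∈ Λ := by
    rw [← Λ.inv_mem_iff, mul_inv_rev, inv_inv]
  exact ⟨⟨s, hs⟩, inv_mul_mem_comm.1 hγs,
    fun t ht => Subtype.ext (huniq t ⟨t.2, inv_mul_mem_comm.1 ht⟩)⟩

variable (hS : IsComplement S Λ)

lemma finite_setOf_equiv_inv_mul_snd_ne_one {γ : Γ} (hγ : (S \ (γ * ·) '' S).Finite) :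
    {s : S | (hS.equiv (γ⁻¹ * s)).2 ≠ 1}.Finite := by
  refine (hγ.preimage Subtype.val_injective.injOn).subset fun s hs => ⟨s.2, ?_⟩
  rintro ⟨t, ht, hts⟩
  apply hs
  rw [← show γ * t = s from hts, inv_mul_cancel_left]
  exact hS.equiv_snd_eq_one_of_mem_of_one_mem Λ.one_mem ht

lemma injective_equiv_inv_mul_fst (γ : Γ) :
    Function.Injective fun s : S => (hS.equiv (γ⁻¹ * s)).1 := by
  intro s t hst
  have h := hS.equiv_fst_eq_iff_leftCosetEquivalence.1 hst
  have h' : (hS.equiv s).1 = (hS.equiv t).1 := by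
    refine hS.equiv_fst_eq_iff_leftCosetEquivalence.2 ?_
    simpa [LeftCosetEquivalence, leftCoset_eq_iff, mul_assoc] using h
  rwa [hS.equiv_fst_eq_self_of_mem_of_one_mem Λ.one_mem s.2,
    hS.equiv_fst_eq_self_of_mem_of_one_mem Λ.one_mem t.2] at h'

variable {B W : Type} [MeasurableSpace W]

noncomputable def blockEquiv : (Γ → W) ≃ᵐ (S → Λ → W) :=
  (MeasurableEquiv.piCongrLeft (fun _ => W) hS.equiv).trans (MeasurableEquiv.curry S Λ W)

@[simp]
lemma blockEquiv_apply (x : Γ → W) (s : S) (l : Λ) : blockEquiv hS x s l = x (s * l) := by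
  simp only [blockEquiv, MeasurableEquiv.trans_apply, MeasurableEquiv.coe_piCongrLeft,
    MeasurableEquiv.curry_apply, Equiv.piCongrLeft_apply, eq_rec_constant]
  rfl

lemma measurePreserving_blockEquiv (ν : Measure W) [IsProbabilityMeasure ν] :
    MeasurePreserving (blockEquiv hS) (Measure.infinitePi fun _ => ν)
      (Measure.infinitePi fun _ => Measure.infinitePi fun _ => ν) := by
  have hcurry : MeasurePreserving (MeasurableEquiv.curry S Λ W) (Measure.infinitePi fun _ => ν)
      (Measure.infinitePi fun _ => Measure.infinitePi fun _ => ν) :=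
    ⟨MeasurableEquiv.measurable _, Measure.infinitePi_map_curry fun _ _ => ν⟩
  exact hcurry.comp ⟨MeasurableEquiv.measurable _,
    Measure.infinitePi_map_piCongrLeft (fun _ => ν) hS.equiv⟩

lemma blockEquiv_shiftS (γ : Γ) (x : Γ → W) (s : S) :
    blockEquiv hS (shiftS γ x) s =
      shiftS (hS.equiv (γ⁻¹ * s)).2⁻¹ (blockEquiv hS x (hS.equiv (γ⁻¹ * s)).1) := by
  funext l
  simp only [shiftS, blockEquiv_apply, inv_inv, smul_eq_mul]
  change x (γ⁻¹ * (s * l)) = x ((hS.equiv (γ⁻¹ * s)).1 * ((hS.equiv (γ⁻¹ * s)).2 * l))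
  rw [← mul_assoc, ← mul_assoc, hS.equiv_fst_mul_equiv_snd]

lemma simRel_iff_blockEquiv {β : B → W → W} {x y : Γ → W} :
    simRel β x y ↔ (∀ s, simRel β (blockEquiv hS x s) (blockEquiv hS y s)) ∧
      {s | blockEquiv hS x s ≠ blockEquiv hS y s}.Finite := by
  have h (x : Γ → W) : Function.uncurry (blockEquiv hS x) = x ∘ hS.equiv.symm := by
    funext ⟨s, l⟩
    simp only [Function.uncurry_apply_pair, blockEquiv_apply, Function.comp_apply]
    rfl
  rw [← simRel_comp_equiv hS.equiv.symm, ← simRel_uncurry_iff, h, h]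

end CosetBlocks

/-- `CofinitelyEquivariant β χ μ f` unfolds to `∀ᵐ y ∂μ, CofinitelyEquivariantAt β χ f y`. -/
def CofinitelyEquivariantAt {G Y Z B C : Type} [Group G] (β : B → Y → Y) (χ : C → Z → Z)
    (f : (G → Y) → (G → Z)) (y : G → Y) : Prop :=
  ∀ x, simRel β x y → ∀ γ : G, simRel χ (f (shiftS γ x)) (shiftS γ (f y))

section LiftBlockwise

variable {Γ : Type} [Group Γ] {Λ : Subgroup Γ} {S : Set Γ} (hS : Subgroup.IsComplement S Λ)
  {B C Y Z : Type} [MeasurableSpace Y] [MeasurableSpace Z]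

noncomputable def liftBlockwise (f : (Λ → Y) → (Λ → Z)) : (Γ → Y) → (Γ → Z) :=
  (blockEquiv hS).symm ∘ Pi.map (fun _ => f) ∘ blockEquiv hS

@[simp]
lemma blockEquiv_liftBlockwise (f : (Λ → Y) → (Λ → Z)) (x : Γ → Y) (s : S) :
    blockEquiv hS (liftBlockwise hS f x) s = f (blockEquiv hS x s) := by
  simp [liftBlockwise]

lemma measurable_liftBlockwise {f : (Λ → Y) → (Λ → Z)} (hf : Measurable f) :
    Measurable (liftBlockwise hS f) :=
  (blockEquiv hS).symm.measurable.comp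
    ((measurable_pi_lambda _ fun s => hf.comp (measurable_pi_apply s)).comp
      (blockEquiv hS).measurable)

lemma cofinitelyEquivariantAt_liftBlockwise (hSfin : ∀ γ : Γ, (S \ (γ * ·) '' S).Finite)
    {β : B → Y → Y} {χ : C → Z → Z} {f : (Λ → Y) → (Λ → Z)} {y : Γ → Y}
    (hy : ∀ s, CofinitelyEquivariantAt β χ f (blockEquiv hS y s)) :
    CofinitelyEquivariantAt β χ (liftBlockwise hS f) y := by
  intro x hxy γ
  rw [simRel_iff_blockEquiv hS] at hxy ⊢
  simp only [blockEquiv_liftBlockwise, blockEquiv_shiftS]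
  refine ⟨fun s => hy _ _ (hxy.1 _) _, ?_⟩
  refine ((finite_setOf_equiv_inv_mul_snd_ne_one hS (hSfin γ)).union
    (hxy.2.preimage (injective_equiv_inv_mul_fst hS γ).injOn)).subset fun s hs => ?_
  by_contra h
  simp only [Set.mem_union, Set.mem_ofPred_eq, Set.mem_preimage, not_or, not_not] at h
  apply hs
  rw [h.1, h.2, inv_one, shiftS_one, shiftS_one]

variable {ν : Measure Y} {η : Measure Z} [IsProbabilityMeasure ν] [IsProbabilityMeasure η]

lemma measurePreserving_liftBlockwise {f : (Λ → Y) → (Λ → Z)}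
    (hf : MeasurePreserving f (Measure.infinitePi fun _ => ν) (Measure.infinitePi fun _ => η)) :
    MeasurePreserving (liftBlockwise hS f) (Measure.infinitePi fun _ => ν)
      (Measure.infinitePi fun _ => η) :=
  (MeasurePreserving.symm _ (measurePreserving_blockEquiv hS η)).comp
    (hf.piMap_infinitePi.comp (measurePreserving_blockEquiv hS ν))

variable [Countable Γ]

lemma ae_liftBlockwise_leftInverse {f : (Λ → Y) → (Λ → Z)} {g : (Λ → Z) → (Λ → Y)}
    (h : ∀ᵐ u ∂(Measure.infinitePi fun _ => ν), g (f u) = u) :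
    ∀ᵐ x ∂(Measure.infinitePi fun _ => ν), liftBlockwise hS g (liftBlockwise hS f x) = x := by
  filter_upwards [(measurePreserving_blockEquiv hS ν).quasiMeasurePreserving.ae
    (ae_forall_infinitePi h)] with x hx
  conv_rhs => rw [← (blockEquiv hS).symm_apply_apply x]
  simp only [liftBlockwise, Function.comp_apply, MeasurableEquiv.apply_symm_apply]
  congr 1
  funext s
  exact hx s

lemma cofinitelyEquivariant_liftBlockwise (hSfin : ∀ γ : Γ, (S \ (γ * ·) '' S).Finite)
    {β : B → Y → Y} {χ : C → Z → Z} {f : (Λ → Y) → (Λ → Z)}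
    (hf : CofinitelyEquivariant β χ (Measure.infinitePi fun _ => ν) f) :
    CofinitelyEquivariant β χ (Measure.infinitePi fun _ => ν) (liftBlockwise hS f) :=
  ((measurePreserving_blockEquiv hS ν).quasiMeasurePreserving.ae
    (ae_forall_infinitePi (p := CofinitelyEquivariantAt β χ f) hf)).mono
    fun _ hy => cofinitelyEquivariantAt_liftBlockwise hS hSfin hy

end LiftBlockwise

theorem biCofinitelyEquivariant_lift_along_coset_reps_general
    (Γ B C Y Z : Type) [Group Γ] [Countable Γ]
    (Λ : Subgroup Γ)
    [MeasurableSpace Y] [MeasurableSpace Z]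
    (ν : Measure Y) (η : Measure Z) [IsProbabilityMeasure ν] [IsProbabilityMeasure η]
    (b : B → Y → Y) (c : C → Z → Z)
    (S : Set Γ)
    (hSrep : ∀ γ : Γ, ∃! s : Γ, s ∈ S ∧ γ⁻¹ * s ∈ Λ)
    (hSfin : ∀ γ : Γ, (symmDiff ((γ * ·) '' S) S).Finite)
    (νΛ : Measure (Λ → Y)) (ηΛ : Measure (Λ → Z))
    (hνΛ : IsProductMeasure ν νΛ) (hηΛ : IsProductMeasure η ηΛ)
    (hΛiso : ∃ (φΛ : (Λ → Y) → (Λ → Z)) (ψΛ : (Λ → Z) → (Λ → Y)),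
      BiCofinitelyEquivariant b c νΛ ηΛ φΛ ψΛ)
    (νΓ : Measure (Γ → Y)) (ηΓ : Measure (Γ → Z))
    (hνΓ : IsProductMeasure ν νΓ) (hηΓ : IsProductMeasure η ηΓ) :
    ∃ (φ : (Γ → Y) → (Γ → Z)) (ψ : (Γ → Z) → (Γ → Y)),
      BiCofinitelyEquivariant b c νΓ ηΓ φ ψ := by
  obtain ⟨φΛ, ψΛ, hφ, hψ, hψφ, hφψ, hφcof, hψcof⟩ := hΛiso
  have hS := isComplement_of_existsUnique_inv_mul_mem hSrep
  have hSfin' (γ : Γ) : (S \ (γ * ·) '' S).Finite :=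
    (hSfin γ).subset (symmDiff_def _ S ▸ Set.subset_union_right)
  obtain rfl := hνΛ.eq_infinitePi
  obtain rfl := hηΛ.eq_infinitePi
  obtain rfl := hνΓ.eq_infinitePi
  obtain rfl := hηΓ.eq_infinitePi
  exact ⟨liftBlockwise hS φΛ, liftBlockwise hS ψΛ, measurePreserving_liftBlockwise hS hφ,
    measurable_liftBlockwise hS hψ, ae_liftBlockwise_leftInverse hS hψφ,
    ae_liftBlockwise_leftInverse hS hφψ, cofinitelyEquivariant_liftBlockwise hS hSfin' hφcof,
    cofinitelyEquivariant_liftBlockwise hS hSfin' hψcof⟩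

/-- Lifting a bi-cofinitely `Λ`-equivariant isomorphism along a set of
left coset representatives `S` for `Λ` in `Γ` with `γS △ S` finite for all `γ`: one obtains
a bi-cofinitely `Γ`-equivariant isomorphism. -/
theorem biCofinitelyEquivariant_lift_along_coset_reps
    (Γ B C Y Z : Type) [Group Γ] [Countable Γ] [Group B] [Countable B] [Group C] [Countable C]
    (Λ : Subgroup Γ)
    [MeasurableSpace Y] [MeasurableSpace Z] [StandardBorelSpace Y] [StandardBorelSpace Z]
    (ν : Measure Y) (η : Measure Z) [IsProbabilityMeasure ν] [IsProbabilityMeasure η]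
    (b : B → Y → Y) (c : C → Z → Z) (hb : IsPmpAction b ν) (hc : IsPmpAction c η)
    (S : Set Γ)
    (hSrep : ∀ γ : Γ, ∃! s : Γ, s ∈ S ∧ γ⁻¹ * s ∈ Λ)
    (hSfin : ∀ γ : Γ, (symmDiff ((γ * ·) '' S) S).Finite)
    (νΛ : Measure (Λ → Y)) (ηΛ : Measure (Λ → Z))
    (hνΛ : IsProductMeasure ν νΛ) (hηΛ : IsProductMeasure η ηΛ)
    (hΛiso : ∃ (φΛ : (Λ → Y) → (Λ → Z)) (ψΛ : (Λ → Z) → (Λ → Y)),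
      BiCofinitelyEquivariant b c νΛ ηΛ φΛ ψΛ)
    (νΓ : Measure (Γ → Y)) (ηΓ : Measure (Γ → Z))
    (hνΓ : IsProductMeasure ν νΓ) (hηΓ : IsProductMeasure η ηΓ) :
    ∃ (φ : (Γ → Y) → (Γ → Z)) (ψ : (Γ → Z) → (Γ → Y)),
      BiCofinitelyEquivariant b c νΓ ηΓ φ ψ :=
  biCofinitelyEquivariant_lift_along_coset_reps_general Γ B C Y Z Λ ν η b c S hSrep hSfin νΛ ηΛ hνΛ
    hηΛ hΛiso νΓ ηΓ hνΓ hηΓ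

end OEW
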